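/- arXiv:2503.09827 — 4 statements merged into one kernel-verified Lean document; each statement's English description precedes it below -/
import Mathlib

section
/- Let K: ℝ × ℝ → ℂ be a smooth positive-type kernel (all finite Gram matrices Hermitian positive semidefinite) with K(z,z) > 0. Then the infinitesimal Cauchy–Schwarz inequality holds: |∂₂K(z,z)|² ≤ K(z,z)·∂₁∂₂K(z,z) for all z ∈ ℝ. -/
open scoped ComplexOrder
open Matrix Filter Asymptotics Topology
set_option maxHeartbeats 2000000

lemma psd_cauchy_schwarz {n : ℕ} (M : Matrix (Fin n) (Fin n) ℂ) (hM : M.PosSemidef)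
    (x y : Fin n → ℂ) :
    ‖star x ⬝ᵥ M.mulVec y‖ ^ 2 ≤
      (star x ⬝ᵥ M.mulVec x).re * (star y ⬝ᵥ M.mulVec y).re := by
  letI core : PreInnerProductSpace.Core ℂ (Fin n → ℂ) :=
  { inner := fun a b => star a ⬝ᵥ M.mulVec b
    conj_inner_symm := by
      intro a b
      have h1 : star (star b ⬝ᵥ M.mulVec a) = star (M.mulVec a) ⬝ᵥ b := by
        rw [star_dotProduct]; simp
      have h2 : star (M.mulVec a) = Matrix.vecMul (star a) Mᴴ := Matrix.star_mulVec M a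
      calc (starRingEnd ℂ) (star b ⬝ᵥ M.mulVec a)
          = star (M.mulVec a) ⬝ᵥ b := h1
        _ = Matrix.vecMul (star a) Mᴴ ⬝ᵥ b := by rw [h2]
        _ = Matrix.vecMul (star a) M ⬝ᵥ b := by rw [hM.1]
        _ = star a ⬝ᵥ M.mulVec b := (Matrix.dotProduct_mulVec _ _ _).symm
    re_inner_nonneg := by
      intro a
      have := hM.dotProduct_mulVec_nonneg a
      rw [Complex.le_def] at this
      simpa using this.1
    add_left := by
      intro a b c
      simp [star_add, add_dotProduct]
    smul_left := by
      intro a b r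
      show star (r • a) ⬝ᵥ M.mulVec b = _
      rw [star_smul, smul_dotProduct, smul_eq_mul]
      rfl }
  letI : Inner ℂ (Fin n → ℂ) := InnerProductSpace.Core.toPreInner'
  have h := InnerProductSpace.Core.inner_mul_inner_self_le (𝕜 := ℂ) (F := Fin n → ℂ) x y
  have hxy : (inner ℂ x y : ℂ) = star x ⬝ᵥ M.mulVec y := rfl
  have hyx : (inner ℂ y x : ℂ) = star y ⬝ᵥ M.mulVec x := rfl
  have hxx : (inner ℂ x x : ℂ) = star x ⬝ᵥ M.mulVec x := rfl
  have hyy : (inner ℂ y y : ℂ) = star y ⬝ᵥ M.mulVec y := rfl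
  rw [hxy, hyx, hxx, hyy] at h
  have hnorm : ‖star y ⬝ᵥ M.mulVec x‖ = ‖star x ⬝ᵥ M.mulVec y‖ := by
    have : (starRingEnd ℂ) (star y ⬝ᵥ M.mulVec x) = star x ⬝ᵥ M.mulVec y :=
      core.conj_inner_symm x y
    rw [← this, RCLike.norm_conj]
  rw [hnorm, ← sq] at h
  simpa using h

lemma tendsto_div_sq_of_isLittleO {φ : ℝ → ℂ} {l : Filter ℝ}
    (h : φ =o[l] fun h : ℝ => h ^ 2) :
    Tendsto (fun h : ℝ => φ h / (h : ℂ) ^ 2) l (𝓝 0) := by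
  have h2 : φ =o[l] fun h : ℝ => ((h : ℂ)) ^ 2 :=
    h.trans_isBigO (Asymptotics.isBigO_of_le l (fun x => by
      simp [norm_pow, Complex.norm_real]))
  exact h2.tendsto_div_nhds_zero

lemma tendsto_div_of_isLittleO {φ : ℝ → ℂ} {l : Filter ℝ}
    (h : φ =o[l] fun h : ℝ => h) :
    Tendsto (fun h : ℝ => φ h / (h : ℂ)) l (𝓝 0) := by
  have h2 : φ =o[l] fun h : ℝ => ((h : ℂ)) :=
    h.trans_isBigO (Asymptotics.isBigO_of_le l (fun x => by
      simp [Complex.norm_real]))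
  exact h2.tendsto_div_nhds_zero

/-- Infinitesimal Cauchy–Schwarz inequality: for a smooth positive-type kernel `K`
on `ℝ` with `K(z,z) > 0`, `|∂₂K(z,z)|² ≤ K(z,z)·∂₁∂₂K(z,z)`. -/
theorem infinitesimal_cauchy_schwarz (K : ℝ → ℝ → ℂ)
    (hsmooth : ContDiff ℝ (⊤ : ℕ∞) (fun p : ℝ × ℝ => K p.1 p.2))
    (hpos : ∀ (n : ℕ) (z : Fin n → ℝ),
      (Matrix.of fun j k => K (z j) (z k) : Matrix (Fin n) (Fin n) ℂ).PosSemidef)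
    (hdiag : ∀ z : ℝ, 0 < (K z z).re) (z : ℝ) :
    ‖deriv (fun y => K z y) z‖ ^ 2 ≤
      (K z z).re * (deriv (fun x => deriv (fun y => K x y) z) z).re := by
  classical
  set F : ℝ × ℝ → ℂ := fun p => K p.1 p.2 with hFdef
  have hFdiff : Differentiable ℝ F := hsmooth.differentiable (by simp)
  set f' : ℝ × ℝ → (ℝ × ℝ) →L[ℝ] ℂ := fderiv ℝ F with hf'def
  have hf'c : ContDiff ℝ (⊤ : ℕ∞) f' := hsmooth.fderiv_right (by simp)
  set x₀ : ℝ × ℝ := (z, z) with hx₀def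
  set f'' : (ℝ × ℝ) →L[ℝ] (ℝ × ℝ) →L[ℝ] ℂ := fderiv ℝ f' x₀ with hf''def
  set v : ℝ × ℝ := (1, 0) with hvdef
  set w : ℝ × ℝ := (0, 1) with hwdef
  -- first derivative identification
  have hB : ∀ x : ℝ, HasDerivAt (fun y => K x y) (f' (x, z) w) z := by
    intro x
    have hcurve : HasDerivAt (fun y : ℝ => ((x, y) : ℝ × ℝ)) w z :=
      (hasDerivAt_const z x).prodMk (hasDerivAt_id z)
    exact ((hFdiff (x, z)).hasFDerivAt.comp_hasDerivAt z hcurve)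
  have hder : ∀ x : ℝ, deriv (fun y => K x y) z = f' (x, z) w := fun x => (hB x).deriv
  have hf'd : DifferentiableAt ℝ f' x₀ := (hf'c.differentiable (by simp)) x₀
  have hG : HasDerivAt (fun x : ℝ => f' (x, z)) (f'' v) z := by
    have hcurve : HasDerivAt (fun x : ℝ => ((x, z) : ℝ × ℝ)) v z :=
      (hasDerivAt_id z).prodMk (hasDerivAt_const z z)
    exact hf'd.hasFDerivAt.comp_hasDerivAt_of_eq z hcurve rfl
  have hDval : deriv (fun x => deriv (fun y => K x y) z) z = f'' v w := by
    have e : (fun x : ℝ => deriv (fun y => K x y) z) = fun x => f' (x, z) w :=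
      funext fun x => hder x
    rw [e]
    have := hG.clm_apply (hasDerivAt_const z w)
    simpa using this.deriv
  -- setup for the Taylor lemmas
  have hf : ∀ y ∈ interior (Set.univ : Set (ℝ × ℝ)), HasFDerivAt F (f' y) y :=
    fun y _ => (hFdiff y).hasFDerivAt
  have hx : HasFDerivWithinAt f' f'' (interior (Set.univ : Set (ℝ × ℝ))) x₀ :=
    hf'd.hasFDerivAt.hasFDerivWithinAt
  have xs : x₀ ∈ (Set.univ : Set (ℝ × ℝ)) := Set.mem_univ _
  set v1 : ℝ × ℝ := (1, 1) with hv1def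
  have taylor := (convex_univ (𝕜 := ℝ)).taylor_approx_two_segment (f := F) (f' := f')
      (f'' := f'') hf xs hx (v := v1) (w := w) (by simp) (by simp)
  have altsum := (convex_univ (𝕜 := ℝ)).isLittleO_alternate_sum_square (f := F) (f' := f')
      (f'' := f'') hf xs hx (v := v) (w := w) (by simp) (by simp)
  set l : Filter ℝ := 𝓝[>] (0:ℝ) with hldef
  set b : ℝ → ℂ := fun h => (F (x₀ + h • v1 + h • w) - F (x₀ + h • v1)) / (h:ℂ) with hbdef
  set d : ℝ → ℂ := fun h => (F (x₀ + h • (2 • v + 2 • w)) + F (x₀ + h • (v + w))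
      - F (x₀ + h • (2 • v + w)) - F (x₀ + h • (v + 2 • w))) / (h:ℂ)^2 with hddef
  set a : ℝ → ℝ := fun h => (F (x₀ + h • (v + w))).re with hadef
  -- limit of d
  have Hd : Tendsto d l (𝓝 (f'' v w)) := by
    have t1 := tendsto_div_sq_of_isLittleO altsum
    have t2 := t1.add_const (f'' v w)
    rw [zero_add] at t2
    apply t2.congr'
    filter_upwards [self_mem_nhdsWithin] with h hh
    have hne : ((h:ℂ))^2 ≠ 0 := pow_ne_zero _ (Complex.ofReal_ne_zero.mpr (ne_of_gt hh))
    have hne1 : ((h:ℂ)) ≠ 0 := Complex.ofReal_ne_zero.mpr (ne_of_gt hh)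
    rw [hddef]
    simp only [Complex.real_smul, Complex.ofReal_pow]
    field_simp
    ring
  -- limit of b
  have taylor1 : (fun h : ℝ => F (x₀ + h • v1 + h • w) - F (x₀ + h • v1) - h • f' x₀ w
      - h ^ 2 • f'' v1 w - (h ^ 2 / 2) • f'' w w) =o[l] fun h => h := by
    refine taylor.trans_isBigO (Asymptotics.IsBigO.of_bound 1 ?_)
    filter_upwards [Ioc_mem_nhdsGT_of_mem (Set.left_mem_Ico.mpr zero_lt_one)] with h hh
    rw [one_mul, Real.norm_eq_abs, Real.norm_eq_abs]
    rw [abs_of_pos (pow_pos hh.1 2), abs_of_pos hh.1]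
    nlinarith [hh.1, hh.2]
  have Hb : Tendsto b l (𝓝 (f' x₀ w)) := by
    have t1 := tendsto_div_of_isLittleO taylor1
    have c1 : Tendsto (fun h : ℝ => (h : ℂ) * (f'' v1 w)) l (𝓝 0) := by
      have : Continuous fun h : ℝ => (h : ℂ) * (f'' v1 w) := by continuity
      have h0 := this.tendsto 0
      simp only [Complex.ofReal_zero, zero_mul] at h0
      exact h0.mono_left nhdsWithin_le_nhds
    have c2 : Tendsto (fun h : ℝ => ((h : ℂ)/2) * (f'' w w)) l (𝓝 0) := by
      have : Continuous fun h : ℝ => ((h : ℂ)/2) * (f'' w w) := by continuity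
      have h0 := this.tendsto 0
      simp only [Complex.ofReal_zero, zero_div, zero_mul] at h0
      exact h0.mono_left nhdsWithin_le_nhds
    have t2 := ((t1.add_const (f' x₀ w)).add c1).add c2
    rw [zero_add, add_zero, add_zero] at t2
    apply t2.congr'
    filter_upwards [self_mem_nhdsWithin] with h hh
    have hne : ((h:ℂ)) ≠ 0 := Complex.ofReal_ne_zero.mpr (ne_of_gt hh)
    rw [hbdef]
    simp only [Complex.real_smul, Complex.ofReal_pow]
    field_simp
    push_cast
    ring
  -- limit of a
  have Ha : Tendsto a l (𝓝 ((K z z).re)) := by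
    have hc : Continuous a := by
      rw [hadef]
      apply Complex.continuous_re.comp
      exact hsmooth.continuous.comp (by continuity)
    have h0 := hc.tendsto 0
    have : a 0 = (K z z).re := by simp [hadef, hFdef, hx₀def]
    rw [this] at h0
    exact h0.mono_left nhdsWithin_le_nhds
  -- point computations
  have ept1 : ∀ h : ℝ, x₀ + h • v1 + h • w = (z + h, z + 2*h) := by
    intro h
    simp only [hx₀def, hv1def, hwdef, Prod.smul_mk, smul_eq_mul, Prod.mk_add_mk, Prod.mk.injEq]
    constructor <;> ring
  have ept2 : ∀ h : ℝ, x₀ + h • v1 = (z + h, z + h) := by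
    intro h
    simp only [hx₀def, hv1def, Prod.smul_mk, smul_eq_mul, Prod.mk_add_mk, Prod.mk.injEq]
    constructor <;> ring
  have ept3 : ∀ h : ℝ, x₀ + h • (2 • v + 2 • w) = (z + 2*h, z + 2*h) := by
    intro h
    simp only [hx₀def, hvdef, hwdef, Prod.smul_mk, smul_eq_mul, Prod.mk_add_mk, Prod.mk.injEq,
      Prod.smul_mk]
    constructor <;> ring
  have ept4 : ∀ h : ℝ, x₀ + h • (v + w) = (z + h, z + h) := by
    intro h
    simp only [hx₀def, hvdef, hwdef, Prod.smul_mk, smul_eq_mul, Prod.mk_add_mk, Prod.mk.injEq]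
    constructor <;> ring
  have ept5 : ∀ h : ℝ, x₀ + h • (2 • v + w) = (z + 2*h, z + h) := by
    intro h
    simp only [hx₀def, hvdef, hwdef, Prod.smul_mk, smul_eq_mul, Prod.mk_add_mk, Prod.mk.injEq]
    constructor <;> ring
  have ept6 : ∀ h : ℝ, x₀ + h • (v + 2 • w) = (z + h, z + 2*h) := by
    intro h
    simp only [hx₀def, hvdef, hwdef, Prod.smul_mk, smul_eq_mul, Prod.mk_add_mk, Prod.mk.injEq]
    constructor <;> ring
  -- key inequality from positive semidefiniteness
  have key : ∀ h : ℝ, 0 < h → ‖b h‖^2 ≤ a h * (d h).re := by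
    intro h hh
    have hcne : (h:ℂ) ≠ 0 := Complex.ofReal_ne_zero.mpr (ne_of_gt hh)
    have hM := hpos 2 ![z + h, z + 2*h]
    have CS := psd_cauchy_schwarz _ hM ![1, 0] ![-(1/(h:ℂ)), 1/(h:ℂ)]
    have E1 : star (![1,0] : Fin 2 → ℂ) ⬝ᵥ
        (Matrix.of fun j k => K (![z+h, z+2*h] j) (![z+h, z+2*h] k)).mulVec
          ![-(1/(h:ℂ)), 1/(h:ℂ)] = b h := by
      rw [hbdef]
      beta_reduce
      rw [ept1 h, ept2 h]
      show _ = (K (z+h) (z+2*h) - K (z+h) (z+h)) / (h:ℂ)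
      simp [Matrix.mulVec, dotProduct, Fin.sum_univ_two]
      field_simp
      ring
    have E2 : star (![1,0] : Fin 2 → ℂ) ⬝ᵥ
        (Matrix.of fun j k => K (![z+h, z+2*h] j) (![z+h, z+2*h] k)).mulVec
          (![1,0] : Fin 2 → ℂ) = K (z+h) (z+h) := by
      simp [Matrix.mulVec, dotProduct, Fin.sum_univ_two]
    have E3 : star (![-(1/(h:ℂ)), 1/(h:ℂ)]) ⬝ᵥ
        (Matrix.of fun j k => K (![z+h, z+2*h] j) (![z+h, z+2*h] k)).mulVec
          ![-(1/(h:ℂ)), 1/(h:ℂ)] = d h := by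
      rw [hddef]
      beta_reduce
      rw [ept3 h, ept4 h, ept5 h, ept6 h]
      show _ = (K (z+2*h) (z+2*h) + K (z+h) (z+h) - K (z+2*h) (z+h) - K (z+h) (z+2*h)) / (h:ℂ)^2
      simp [Matrix.mulVec, dotProduct, Fin.sum_univ_two]
      field_simp
      ring
    rw [E1, E2, E3] at CS
    have Ea : a h = (K (z+h) (z+h)).re := by
      rw [hadef]; beta_reduce; rw [ept4 h]
    rw [Ea]
    exact CS
  -- pass to the limit
  have HB : Tendsto (fun h => ‖b h‖^2) l (𝓝 (‖f' x₀ w‖^2)) := (Hb.norm).pow 2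
  have HD : Tendsto (fun h => a h * (d h).re) l (𝓝 ((K z z).re * (f'' v w).re)) :=
    Ha.mul ((Complex.continuous_re.tendsto _).comp Hd)
  have final : ‖f' x₀ w‖^2 ≤ (K z z).re * (f'' v w).re := by
    refine le_of_tendsto_of_tendsto HB HD ?_
    filter_upwards [self_mem_nhdsWithin] with h hh using key h hh
  rw [hder z, hDval]
  exact final
end

section
/- Let K: ℝ × ℝ → ℂ be a smooth positive-type kernel with K(z,z) > 0 for all z, and P(z,z') := log K(z,z') near the diagonal. Then ∂₁∂₂P(z,z) = (K(z,z)·∂₁∂₂K(z,z) − ∂₁K(z,z)·∂₂K(z,z))/K(z,z)² ≥ 0 for every z ∈ ℝ. -/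
set_option maxHeartbeats 1000000


open scoped ComplexOrder

open Filter Topology Matrix

/-- Second derivative test at a minimum: if `φ 0 = 0`, `φ' 0 = 0`, `φ ≥ 0`,
then the (pointwise) second derivative at `0` is nonnegative. -/
lemma aux_second_deriv_nonneg (φ φ' : ℝ → ℝ) (c : ℝ)
    (hφ : ∀ x, HasDerivAt φ (φ' x) x)
    (hφ'0 : φ' 0 = 0) (hc : HasDerivAt φ' c 0)
    (h0 : φ 0 = 0) (hnn : ∀ x, 0 ≤ φ x) : 0 ≤ c := by
  by_contra hlt
  push_neg at hlt
  have hs : Tendsto (slope φ' 0) (𝓝[≠] (0:ℝ)) (𝓝 c) :=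
    hasDerivAt_iff_tendsto_slope.mp hc
  have h1 : ∀ᶠ x in 𝓝[≠] (0:ℝ), slope φ' 0 x < c / 2 :=
    hs.eventually_lt_const (by linarith)
  have h2 : ∀ᶠ x in 𝓝[>] (0:ℝ), slope φ' 0 x < c / 2 :=
    h1.filter_mono (nhdsWithin_mono _ (fun x hx => by
      simpa using (ne_of_gt (hx : (0:ℝ) < x))))
  obtain ⟨u, hu, hIoo⟩ := mem_nhdsGT_iff_exists_Ioo_subset.mp h2
  have hu0 : (0:ℝ) < u := hu
  have hneg : ∀ x ∈ Set.Ioo (0:ℝ) u, φ' x < 0 := by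
    intro x hx
    have hslope : slope φ' 0 x < c / 2 := hIoo hx
    rw [slope_def_field] at hslope
    have hx0 : (0:ℝ) < x := hx.1
    rw [hφ'0, sub_zero, sub_zero, div_lt_iff₀ hx0] at hslope
    nlinarith
  have hanti : StrictAntiOn φ (Set.Icc 0 (u/2)) := by
    apply strictAntiOn_of_deriv_neg (convex_Icc _ _)
    · exact (Differentiable.continuous (fun x => (hφ x).differentiableAt)).continuousOn
    · intro x hx
      rw [interior_Icc] at hx
      rw [(hφ x).deriv]
      exact hneg x ⟨hx.1, lt_trans hx.2 (by linarith)⟩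
  have h02 : (0:ℝ) ∈ Set.Icc (0:ℝ) (u/2) := by constructor <;> linarith
  have hu2 : u/2 ∈ Set.Icc (0:ℝ) (u/2) := by constructor <;> linarith
  have hlt2 := hanti h02 hu2 (by linarith)
  rw [h0] at hlt2
  exact absurd (hnn (u/2)) (not_le.mpr hlt2)

/-- For a smooth positive-type kernel `K` on `ℝ` with `K(z,z) > 0` and
`P(z,z') = log K(z,z')`, one has
`∂₁∂₂P(z,z) = (K(z,z)·∂₁∂₂K(z,z) − ∂₁K(z,z)·∂₂K(z,z)) / K(z,z)²`, which is a
nonnegative real number. -/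
theorem mixed_log_derivative_nonneg (K : ℝ → ℝ → ℂ)
    (hsmooth : ContDiff ℝ (⊤ : ℕ∞) (fun p : ℝ × ℝ => K p.1 p.2))
    (hpos : ∀ (n : ℕ) (z : Fin n → ℝ),
      (Matrix.of fun j k => K (z j) (z k) : Matrix (Fin n) (Fin n) ℂ).PosSemidef)
    (hdiag : ∀ z : ℝ, 0 < (K z z).re) (z : ℝ) :
    deriv (fun x => deriv (fun y => Complex.log (K x y)) z) z =
      (K z z * deriv (fun x => deriv (fun y => K x y) z) z -
        deriv (fun x => K x z) z * deriv (fun y => K z y) z) / (K z z) ^ 2 ∧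
    0 ≤ (deriv (fun x => deriv (fun y => Complex.log (K x y)) z) z).re := by
  have hF : ContDiff ℝ (⊤ : ℕ∞) (fun p : ℝ × ℝ => K p.1 p.2) := hsmooth
  set F : ℝ × ℝ → ℂ := fun p : ℝ × ℝ => K p.1 p.2 with hFdef
  set Df : ℝ × ℝ → (ℝ × ℝ) →L[ℝ] ℂ := fderiv ℝ F with hDfdef
  have hDf_diff : ContDiff ℝ (⊤ : ℕ∞) Df := hF.fderiv_right (by simp)
  have hFd : ∀ p, HasFDerivAt F (Df p) p :=
    fun p => (hF.differentiable (by simp) p).hasFDerivAt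
  have hDfd : ∀ p, HasFDerivAt Df (fderiv ℝ Df p) p :=
    fun p => (hDf_diff.differentiable (by simp) p).hasFDerivAt
  -- composition with curves
  have hcompF : ∀ (c : ℝ → ℝ × ℝ) (v : ℝ × ℝ) (h : ℝ), HasDerivAt c v h →
      HasDerivAt (fun u => F (c u)) (Df (c h) v) h :=
    fun c v h hc => (hFd (c h)).comp_hasDerivAt h hc
  have hcompDf : ∀ (c : ℝ → ℝ × ℝ) (v w : ℝ × ℝ) (h : ℝ), HasDerivAt c v h →
      HasDerivAt (fun u => Df (c u) w) (fderiv ℝ Df (c h) v w) h := by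
    intro c v w h hc
    exact (ContinuousLinearMap.apply ℝ ℂ w).hasFDerivAt.comp_hasDerivAt h
      ((hDfd (c h)).comp_hasDerivAt h hc)
  -- partial derivatives
  have hK1 : ∀ x y, HasDerivAt (fun x' => K x' y) (Df (x, y) (1, 0)) x := by
    intro x y
    exact hcompF (fun x' => (x', y)) (1, 0) x ((hasDerivAt_id x).prodMk (hasDerivAt_const x y))
  have hK2 : ∀ x y, HasDerivAt (fun y' => K x y') (Df (x, y) (0, 1)) y := by
    intro x y
    exact hcompF (fun y' => (x, y')) (0, 1) y ((hasDerivAt_const y x).prodMk (hasDerivAt_id y))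
  -- hermitian facts
  have hreal : ∀ w, K w w = ((K w w).re : ℂ) := by
    intro w
    have h := (hpos 1 ![w]).1.apply 0 0
    simp only [Matrix.of_apply, Matrix.cons_val_zero, Complex.star_def] at h
    exact (Complex.conj_eq_iff_re.mp h).symm
  have hA0 : K z z ≠ 0 := by
    intro h
    have h2 := hdiag z
    rw [h] at h2
    simp at h2
  -- the second mixed derivative in the goal equals (fderiv ℝ Df (z, z) (1, 0) (0, 1))
  have hu_eq : (fun x => deriv (fun y => K x y) z) = fun x => Df (x, z) (0, 1) :=
    funext fun x => (hK2 x z).deriv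
  have hderiv_u : HasDerivAt (fun x => Df (x, z) (0, 1)) (fderiv ℝ Df (z, z) (1, 0) (0, 1)) z :=
    hcompDf (fun x => (x, z)) (1, 0) (0, 1) z
      ((hasDerivAt_id z).prodMk (hasDerivAt_const z z))
  have hK12 : deriv (fun x => deriv (fun y => K x y) z) z = (fderiv ℝ Df (z, z) (1, 0) (0, 1)) := by
    rw [hu_eq]; exact hderiv_u.deriv
  have hB1' : deriv (fun x => K x z) z = (Df (z, z) (1, 0)) := (hK1 z z).deriv
  have hB2' : deriv (fun y => K z y) z = (Df (z, z) (0, 1)) := (hK2 z z).deriv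
  -- Part 1 : the formula for the mixed log derivative
  have hev : ∀ᶠ x in 𝓝 z, 0 < (K x z).re := by
    have hcont : ContinuousAt (fun x : ℝ => (K x z).re) z :=
      ((Complex.continuous_re.comp hF.continuous).comp
        (continuous_id.prodMk continuous_const)).continuousAt
    exact hcont.eventually (eventually_gt_nhds (hdiag z))
  have hEq : (fun x => deriv (fun y => Complex.log (K x y)) z)
      =ᶠ[𝓝 z] fun x => (K x z)⁻¹ * Df (x, z) (0, 1) := by
    filter_upwards [hev] with x hx
    rw [show (K x z)⁻¹ * Df (x, z) (0, 1) = Df (x, z) (0, 1) • (K x z)⁻¹ by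
      rw [smul_eq_mul]; ring]
    exact (HasDerivAt.scomp_of_eq z (Complex.hasDerivAt_log (Or.inl hx)) (hK2 x z) rfl).deriv
  have hRHS : HasDerivAt (fun x => (K x z)⁻¹ * Df (x, z) (0, 1))
      ((Df (z, z) (1, 0) • (-(K z z ^ 2)⁻¹)) * Df (z, z) (0, 1) +
        (K z z)⁻¹ * (fderiv ℝ Df (z, z) (1, 0) (0, 1))) z := by
    have hinv : HasDerivAt (fun x => (K x z)⁻¹) (Df (z, z) (1, 0) • (-(K z z ^ 2)⁻¹)) z :=
      HasDerivAt.scomp_of_eq z (hasDerivAt_inv hA0) (hK1 z z) rfl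
    exact hinv.mul hderiv_u
  have hpart1 : deriv (fun x => deriv (fun y => Complex.log (K x y)) z) z =
      (K z z * deriv (fun x => deriv (fun y => K x y) z) z -
        deriv (fun x => K x z) z * deriv (fun y => K z y) z) / (K z z) ^ 2 := by
    rw [hEq.deriv_eq, hRHS.deriv] at *
    rw [← hK12, ← hB1', ← hB2', smul_eq_mul]
    field_simp
    ring
  refine ⟨hpart1, ?_⟩
  -- Part 2 : nonnegativity
  set g : ℝ → ℂ := fun h => K z z * K (z + h) (z + h) - K z (z + h) * K (z + h) z with hgdef
  set g' : ℝ → ℂ := fun h => K z z * Df (z + h, z + h) (1, 1) -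
      (Df (z, z + h) (0, 1) * K (z + h) z + K z (z + h) * Df (z + h, z) (1, 0)) with hg'def
  have hdiagcurve : ∀ h : ℝ, HasDerivAt (fun u : ℝ => ((z + u, z + u) : ℝ × ℝ)) (1, 1) h :=
    fun h => ((hasDerivAt_id h).const_add z).prodMk ((hasDerivAt_id h).const_add z)
  have hleftcurve : ∀ h : ℝ, HasDerivAt (fun u : ℝ => ((z, z + u) : ℝ × ℝ)) (0, 1) h :=
    fun h => (hasDerivAt_const h z).prodMk ((hasDerivAt_id h).const_add z)
  have hrightcurve : ∀ h : ℝ, HasDerivAt (fun u : ℝ => ((z + u, z) : ℝ × ℝ)) (1, 0) h :=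
    fun h => ((hasDerivAt_id h).const_add z).prodMk (hasDerivAt_const h z)
  have hq' : ∀ h : ℝ, HasDerivAt (fun u => K (z + u) (z + u)) (Df (z + h, z + h) (1, 1)) h :=
    fun h => hcompF _ _ h (hdiagcurve h)
  have ht2 : ∀ h : ℝ, HasDerivAt (fun u => K z (z + u)) (Df (z, z + h) (0, 1)) h :=
    fun h => hcompF _ _ h (hleftcurve h)
  have ht3 : ∀ h : ℝ, HasDerivAt (fun u => K (z + u) z) (Df (z + h, z) (1, 0)) h :=
    fun h => hcompF _ _ h (hrightcurve h)
  have hg'at : ∀ h, HasDerivAt g (g' h) h :=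
    fun h => ((hq' h).const_mul (K z z)).sub ((ht2 h).mul (ht3 h))
  -- second derivatives along curves at 0
  have hd1 : HasDerivAt (fun u => Df (z + u, z + u) (1, 1))
      (fderiv ℝ Df (z, z) (1, 1) (1, 1)) 0 := by
    simpa using hcompDf (fun u => (z + u, z + u)) (1, 1) (1, 1) 0 (hdiagcurve 0)
  have hd2 : HasDerivAt (fun u => Df (z, z + u) (0, 1))
      (fderiv ℝ Df (z, z) (0, 1) (0, 1)) 0 := by
    simpa using hcompDf (fun u => (z, z + u)) (0, 1) (0, 1) 0 (hleftcurve 0)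
  have hd3 : HasDerivAt (fun u => Df (z + u, z) (1, 0))
      (fderiv ℝ Df (z, z) (1, 0) (1, 0)) 0 := by
    simpa using hcompDf (fun u => (z + u, z)) (1, 0) (1, 0) 0 (hrightcurve 0)
  -- symmetry of the second derivative
  have hsymmraw : fderiv ℝ Df (z, z) (0, 1) (1, 0) = fderiv ℝ Df (z, z) (1, 0) (0, 1) :=
    second_derivative_symmetric hFd (hDfd (z, z)) (0, 1) (1, 0)
  -- value of g and g' at 0
  have hg0 : g 0 = 0 := by simp [hgdef]
  have he : ((1 : ℝ), (1 : ℝ)) = ((1 : ℝ), (0 : ℝ)) + ((0 : ℝ), (1 : ℝ)) := by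
    simp [Prod.ext_iff]
  have hg'0 : g' 0 = 0 := by
    simp only [hg'def, add_zero, he, map_add]
    ring
  -- derivative of g' at 0
  set G2 : ℂ := K z z * fderiv ℝ Df (z, z) (1, 1) (1, 1) -
      (fderiv ℝ Df (z, z) (0, 1) (0, 1) * K z z + (Df (z, z) (0, 1)) * (Df (z, z) (1, 0)) +
        ((Df (z, z) (0, 1)) * (Df (z, z) (1, 0)) + K z z * fderiv ℝ Df (z, z) (1, 0) (1, 0))) with hG2def
  have hg'd : HasDerivAt g' G2 0 := by
    have h := (hd1.const_mul (K z z)).sub ((hd2.mul (ht3 0)).add ((ht2 0).mul hd3))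
    simp only [add_zero] at h
    exact h
  -- the expansion of G2
  have hG2val : G2 = 2 * (K z z * (fderiv ℝ Df (z, z) (1, 0) (0, 1)) - (Df (z, z) (1, 0)) * (Df (z, z) (0, 1))) := by
    rw [hG2def, he]
    simp only [map_add, ContinuousLinearMap.add_apply]
    rw [hsymmraw]
    ring
  -- the nonnegative function φ
  set q : ℝ → ℂ := fun h => K (z + h) (z + h) with hqdef
  have hG'at : ∀ x, HasDerivAt (fun h => q h * g h)
      (Df (z + x, z + x) (1, 1) * g x + q x * g' x) x :=
    fun x => (hq' x).mul (hg'at x)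
  set φ : ℝ → ℝ := fun h => (q h * g h).re with hφdef
  set φ' : ℝ → ℝ := fun h => (Df (z + h, z + h) (1, 1) * g h + q h * g' h).re with hφ'def
  have hφat : ∀ x, HasDerivAt φ (φ' x) x := by
    intro x
    exact Complex.reCLM.hasFDerivAt.comp_hasDerivAt x (hG'at x)
  have hφ'at : HasDerivAt φ' ((K z z * G2).re) 0 := by
    have h : HasDerivAt (fun h => Df (z + h, z + h) (1, 1) * g h + q h * g' h)
        (fderiv ℝ Df (z, z) (1, 1) (1, 1) * g 0 + Df (z + 0, z + 0) (1, 1) * g' 0 +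
          (Df (z + 0, z + 0) (1, 1) * g' 0 + q 0 * G2)) 0 :=
      (hd1.mul (hg'at 0)).add ((hq' 0).mul hg'd)
    have hval : (fderiv ℝ Df (z, z) (1, 1) (1, 1) * g 0 + Df (z + 0, z + 0) (1, 1) * g' 0 +
        (Df (z + 0, z + 0) (1, 1) * g' 0 + q 0 * G2)) = K z z * G2 := by
      rw [hg0, hg'0]
      simp [hqdef]
    rw [hval] at h
    exact Complex.reCLM.hasFDerivAt.comp_hasDerivAt 0 h
  have hφ'0 : φ' 0 = 0 := by
    simp only [hφ'def, hg0, hg'0, mul_zero, add_zero, zero_add, Complex.zero_re]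
  have hφ0 : φ 0 = 0 := by simp [hφdef, hg0]
  -- nonnegativity of φ from positive semidefiniteness
  have hφnn : ∀ x, 0 ≤ φ x := by
    intro x
    have hM := hpos 2 ![z, z + x]
    have h2 := hM.dotProduct_mulVec_nonneg ![K (z + x) (z + x), -(K (z + x) z)]
    have hform : dotProduct (star ![K (z + x) (z + x), -(K (z + x) z)])
        ((Matrix.of fun j k => K (![z, z + x] j) (![z, z + x] k)) *ᵥ
          ![K (z + x) (z + x), -(K (z + x) z)]) = q x * g x := by
      simp only [hqdef, hgdef, dotProduct, Matrix.mulVec, Fin.sum_univ_two,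
        Matrix.of_apply, Matrix.cons_val_zero, Matrix.cons_val_one, Matrix.head_cons,
        Pi.star_apply, star_neg, Complex.star_def]
      rw [hreal (z + x), Complex.conj_ofReal]
      ring
    rw [hform] at h2
    exact (Complex.nonneg_iff.mp h2).1
  have hkey : 0 ≤ (K z z * G2).re :=
    aux_second_deriv_nonneg φ φ' _ hφat hφ'0 hφ'at hφ0 hφnn
  -- conclude
  rw [hpart1, hK12, hB1', hB2']
  rw [hG2val] at hkey
  rw [hreal z] at hkey ⊢
  set N : ℂ := (((K z z).re : ℂ)) * (fderiv ℝ Df (z, z) (1, 0) (0, 1)) - (Df (z, z) (1, 0)) * (Df (z, z) (0, 1)) with hNdef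
  have hkey2 : 0 ≤ ((K z z).re * 2) * N.re := by
    rw [show ((((K z z).re : ℂ)) * (2 * N)) = (((((K z z).re : ℝ) * 2 : ℝ)) : ℂ) * N by
      push_cast; ring, Complex.re_ofReal_mul] at hkey
    exact hkey
  have hNre : 0 ≤ N.re := by nlinarith [hdiag z]
  rw [show ((((K z z).re : ℂ)) ^ 2) = ((((K z z).re ^ 2 : ℝ)) : ℂ) by push_cast; ring,
    Complex.div_ofReal_re]
  exact div_nonneg hNre (sq_nonneg _)
end

section
/- The Klauder coherent product on ℂ × V, K([z₀,z],[z₀',z']) := exp(conj(z₀) + z₀' + ⟪z, z'⟫), is of positive type: for any finite collection of points, the Gram matrix is Hermitian positive semidefinite. -/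
open scoped ComplexOrder

/-! The kernel factors as `K = Dᴴ (exp ∘ G) D`, where `G` is the Gram matrix of the vector parts
and `D` is the diagonal matrix of the `exp z₀`. By the Schur product theorem every Hadamard power of
`G` is positive semidefinite, hence so is the entrywise exponential `∑ₘ G^{∘m} / m!`, because the
positive semidefinite cone is closed. -/

namespace Matrix

variable {n : Type*}

section Topology

variable {R : Type*} [CommRing R] [PartialOrder R] [StarRing R] [TopologicalSpace R]
  [IsTopologicalRing R] [ContinuousStar R] [T2Space R] [ClosedIciTopology R] [Fintype n]

theorem isClosed_setOf_posSemidef : IsClosed {A : Matrix n n R | A.PosSemidef} := by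
  simp_rw [posSemidef_iff_dotProduct_mulVec, Set.ofPred_and, Set.ofPred_forall]
  refine .inter (isClosed_eq (by fun_prop) continuous_id) (isClosed_iInter fun x => ?_)
  exact isClosed_Ici.preimage
    (continuous_const.dotProduct (continuous_id.matrix_mulVec continuous_const))

theorem posSemidef_tsum [IsOrderedAddMonoid R] {ι : Type*} {A : ι → Matrix n n R}
    (hA : ∀ i, (A i).PosSemidef) : (∑' i, A i).PosSemidef := by
  by_cases hs : Summable A
  · exact isClosed_setOf_posSemidef.mem_of_tendsto hs.hasSum
      (.of_forall fun s => posSemidef_sum s fun i _ => hA i)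
  · rw [tsum_eq_zero_of_not_summable hs]
    exact .zero

end Topology

theorem PosSemidef.map_pow {𝕜 : Type*} [RCLike 𝕜] [Fintype n] {A : Matrix n n 𝕜}
    (hA : A.PosSemidef) (m : ℕ) : (A.map (· ^ m)).PosSemidef := by
  induction m with
  | zero =>
    convert posSemidef_vecMulVec_self_star (1 : n → 𝕜) using 1
    ext i j
    simp [vecMulVec_apply]
  | succ m ih =>
    convert ih.hadamard hA using 1
    ext i j
    simp [pow_succ]

theorem map_exp_eq_tsum (A : Matrix n n ℂ) :
    A.map Complex.exp = ∑' m : ℕ, ((m.factorial : ℝ)⁻¹) • A.map (· ^ m) := by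
  refine (HasSum.tsum_eq ?_).symm
  refine Pi.hasSum.2 fun i => Pi.hasSum.2 fun j => ?_
  simpa [Complex.exp_eq_exp_ℂ] using NormedSpace.exp_series_hasSum_exp' (𝕂 := ℝ) (A i j)

theorem PosSemidef.map_exp [Fintype n] {A : Matrix n n ℂ} (hA : A.PosSemidef) :
    (A.map Complex.exp).PosSemidef := by
  rw [map_exp_eq_tsum]
  exact posSemidef_tsum fun m => (hA.map_pow m).smul (by positivity)

end Matrix

/-- The Klauder coherent product `K([z₀,z],[z₀',z']) = exp(conj z₀ + z₀' + ⟪z,z'⟫)`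
on `ℂ × V` is of positive type. -/
theorem klauder_kernel_posSemidef {V : Type*} [NormedAddCommGroup V]
    [InnerProductSpace ℂ V] (n : ℕ) (w : Fin n → ℂ × V) :
    (Matrix.of fun j k =>
        Complex.exp (starRingEnd ℂ (w j).1 + (w k).1 +
          (inner ℂ (w j).2 (w k).2 : ℂ)) :
      Matrix (Fin n) (Fin n) ℂ).PosSemidef := by
  set D := Matrix.diagonal fun j => Complex.exp (w j).1
  convert ((Matrix.posSemidef_gram ℂ fun j => (w j).2).map_exp).conjTranspose_mul_mul_same D
    using 1
  ext j k
  simp only [D, Complex.exp_add, Matrix.of_apply, Matrix.diagonal_conjTranspose,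
    Matrix.mul_diagonal, Matrix.diagonal_mul, Pi.star_apply, RCLike.star_def, ← Complex.exp_conj,
    Matrix.map_apply, Matrix.gram_apply]
  ring
end

section
/- Let Z be a coherent space, Q a quantum space of Z with coherent states |z⟩ satisfying ⟨z|z'⟩ = K(z,z'), and A: Z → Z a map with adjoint A*: Z → Z satisfying K(z, A z') = K(A* z, z') for all z, z'. Then there is a unique linear map Γ(A) on Q with Γ(A)|z⟩ = |A z⟩ for all z ∈ Z. -/
/-!
The map is forced on the spanning family of coherent states, so the only issue is that it is
well defined: a linear relation `∑ cᵢ |zᵢ⟩ = 0` must imply `∑ cᵢ |A zᵢ⟩ = 0`. The adjoint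
identity gives `⟨w| ∑ cᵢ |A zᵢ⟩ = ⟨A* w| ∑ cᵢ |zᵢ⟩ = 0` for every `w`, and a vector orthogonal
to a spanning family vanishes.
-/

open Finsupp

theorem LinearMap.existsUnique_apply_eq_of_span_eq_top {R M N ι : Type*} [Ring R]
    [AddCommGroup M] [Module R M] [AddCommGroup N] [Module R N] {v : ι → M}
    (hv : Submodule.span R (Set.range v) = ⊤) (f : ι → N)
    (hf : ∀ c : ι →₀ R, linearCombination R v c = 0 → linearCombination R f c = 0) :
    ∃! Γ : M →ₗ[R] N, ∀ i, Γ (v i) = f i := by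
  have hsurj : Function.Surjective (linearCombination R v) := by
    rw [← LinearMap.range_eq_top, range_linearCombination, hv]
  let e := (linearCombination R v).quotKerEquivOfSurjective hsurj
  have hker : LinearMap.ker (linearCombination R v) ≤ LinearMap.ker (linearCombination R f) :=
    fun c hc => hf c hc
  let Γ : M →ₗ[R] N := (LinearMap.ker (linearCombination R v)).liftQ _ hker ∘ₗ e.symm
  have hΓ : ∀ i, Γ (v i) = f i := fun i => by
    have hvi : v i = linearCombination R v (Finsupp.single i 1) := by simp
    rw [hvi, LinearMap.comp_apply, LinearEquiv.coe_coe,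
      LinearMap.quotKerEquivOfSurjective_symm_apply,
      Submodule.liftQ_apply, linearCombination_single, one_smul]
  exact ⟨Γ, hΓ, fun Γ' hΓ' => LinearMap.ext_on_range hv fun i => (hΓ' i).trans (hΓ i).symm⟩

section InnerProduct

variable {𝕜 E ι : Type*} [RCLike 𝕜] [NormedAddCommGroup E] [InnerProductSpace 𝕜 E]

theorem eq_zero_of_forall_inner_eq_zero_of_span_eq_top {v : ι → E}
    (hv : Submodule.span 𝕜 (Set.range v) = ⊤) {x : E} (hx : ∀ i, inner 𝕜 (v i) x = 0) :
    x = 0 := by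
  have h : (innerₛₗ 𝕜).flip x = 0 := LinearMap.ext_on_range hv hx
  simpa using LinearMap.congr_fun h x

theorem inner_linearCombination_eq_of_forall {u v : ι → E} {x y : E}
    (h : ∀ i, inner 𝕜 x (u i) = inner 𝕜 y (v i)) (c : ι →₀ 𝕜) :
    inner 𝕜 x (linearCombination 𝕜 u c) = inner 𝕜 y (linearCombination 𝕜 v c) := by
  simp only [← innerₛₗ_apply_apply, apply_linearCombination]
  exact congrArg (linearCombination 𝕜 · c) (funext h)

end InnerProduct

theorem quantization_exists_unique_general {Z : Type*} (K : Z → Z → ℂ)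
    {Q : Type*} [NormedAddCommGroup Q] [InnerProductSpace ℂ Q]
    (coh : Z → Q) (hspan : Submodule.span ℂ (Set.range coh) = ⊤)
    (hK : ∀ z z' : Z, (inner ℂ (coh z) (coh z') : ℂ) = K z z')
    (A Astar : Z → Z) (hadj : ∀ z z' : Z, K z (A z') = K (Astar z) z') :
    ∃! Γ : Q →ₗ[ℂ] Q, ∀ z : Z, Γ (coh z) = coh (A z) := by
  refine LinearMap.existsUnique_apply_eq_of_span_eq_top hspan _ fun c hc => ?_
  refine eq_zero_of_forall_inner_eq_zero_of_span_eq_top hspan fun w => ?_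
  have hinner : ∀ z, inner ℂ (coh w) (coh (A z)) = inner ℂ (coh (Astar w)) (coh z) := fun z => by
    rw [hK, hK, hadj]
  rw [inner_linearCombination_eq_of_forall hinner c, hc, inner_zero_right]

/-- Quantization of a coherent map: if `Q` is a quantum space of the coherent space
`(Z,K)` with coherent states `coh z` satisfying `⟪coh z, coh z'⟫ = K z z'`, and
`A : Z → Z` has an adjoint `A*` with `K z (A z') = K (A* z) z'`, then there is a
unique linear map `Γ` on `Q` with `Γ (coh z) = coh (A z)` for all `z`. -/
theorem quantization_exists_unique {Z : Type*} [Nonempty Z] (K : Z → Z → ℂ)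
    {Q : Type*} [NormedAddCommGroup Q] [InnerProductSpace ℂ Q]
    (coh : Z → Q) (hspan : Submodule.span ℂ (Set.range coh) = ⊤)
    (hK : ∀ z z' : Z, (inner ℂ (coh z) (coh z') : ℂ) = K z z')
    (A Astar : Z → Z) (hadj : ∀ z z' : Z, K z (A z') = K (Astar z) z') :
    ∃! Γ : Q →ₗ[ℂ] Q, ∀ z : Z, Γ (coh z) = coh (A z) :=
  quantization_exists_unique_general K coh hspan hK A Astar hadj
end
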